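/- Let n_j = n_{j+1} in the flag n. Then modulo I_RKst, J_α^n ≡ −J_{α_1,...,α_{j-1}, α_{j+1}−1, α_j+1, ..., α_l}^n (swap of adjacent entries with shift). In particular, if α_j = α_{j+1} − 1 and n_j = n_{j+1}, then J_α^n ≡ 0 modulo I_RKst. -/

import Mathlib

open scoped Classical

noncomputable section

/-- The monomial (word) `u_{l_1} u_{l_2} ⋯ u_{l_n}` in the free associative algebra
`U = ℤ⟨u_1, …, u_N⟩`, whose variables are indexed by `Fin N`. -/
def word (N : ℕ) (l : List (Fin N)) : FreeAlgebra ℤ (Fin N) :=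
  (l.map (FreeAlgebra.ι ℤ)).prod

/-- The generating relations of the two-sided ideal `I_RKst`:
`u_b (u_a u_c - u_c u_a) - (u_a u_c - u_c u_a) u_b = 0` for `a < b < c`, together with
`w = 0` for every word `w` with a repeated letter. -/
inductive RKRel (N : ℕ) : FreeAlgebra ℤ (Fin N) → FreeAlgebra ℤ (Fin N) → Prop
  | knuth_rotation (a b c : Fin N) (hab : a < b) (hbc : b < c) :
      RKRel N
        (FreeAlgebra.ι ℤ b *
            (FreeAlgebra.ι ℤ a * FreeAlgebra.ι ℤ c - FreeAlgebra.ι ℤ c * FreeAlgebra.ι ℤ a) -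
          (FreeAlgebra.ι ℤ a * FreeAlgebra.ι ℤ c - FreeAlgebra.ι ℤ c * FreeAlgebra.ι ℤ a) *
            FreeAlgebra.ι ℤ b)
        0
  | repeated (l : List (Fin N)) (h : ¬ l.Nodup) : RKRel N (word N l) 0

/-- The noncommutative elementary symmetric function
`e_d(u) = ∑_{N ≥ i_1 > i_2 > ⋯ > i_d ≥ 1} u_{i_1} ⋯ u_{i_d}` (so `e_0 = 1` and `e_d = 0`
for `d > N`). -/
def esym (N d : ℕ) : FreeAlgebra ℤ (Fin N) :=
  ∑ f : Fin d → Fin N, if StrictAnti f then word N (List.ofFn f) else 0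

/-- The canonical projection `U → U/I_RKst`. -/
def pr (N : ℕ) : FreeAlgebra ℤ (Fin N) →ₐ[ℤ] RingQuot (RKRel N) :=
  RingQuot.mkAlgHom ℤ (RKRel N)


/-- The flagged noncommutative elementary symmetric function
`e_d([m]) = ∑_{m ≥ i_1 > ⋯ > i_d ≥ 1} u_{i_1} ⋯ u_{i_d}` (letters `1, …, m` correspond to
indices `0, …, m-1` of `Fin N`). -/
def esymFlag (N m d : ℕ) : FreeAlgebra ℤ (Fin N) :=
  ∑ f : Fin d → Fin N,
    if StrictAnti f ∧ ∀ i, (f i : ℕ) < m then word N (List.ofFn f) else 0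

/-- `e_d([m])` with integer index: `e_d([m]) = 0` for `d < 0`. -/
def esymFlagZ (N m : ℕ) (d : ℤ) : FreeAlgebra ℤ (Fin N) :=
  if 0 ≤ d then esymFlag N m d.toNat else 0

/-- The noncommutative column flagged Schur function
`J_α^n = ∑_{π ∈ S_l} sgn(π) e_{α_1+π(1)-1}([n_1]) ⋯ e_{α_l+π(l)-l}([n_l])`
(with integer-valued entries allowed in `α`). -/
def Jflag (N l : ℕ) (α : Fin l → ℤ) (n : Fin l → ℕ) : FreeAlgebra ℤ (Fin N) :=
  ∑ σ : Equiv.Perm (Fin l), ((Equiv.Perm.sign σ : ℤˣ) : ℤ) •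
    (List.ofFn fun k : Fin l =>
      esymFlagZ N (n k) (α k + ((σ k : ℕ) : ℤ) - ((k : ℕ) : ℤ))).prod

/-- The composition obtained from `α` by replacing the entries `(α_j, α_{j+1})`
by `(α_{j+1} − 1, α_j + 1)`. -/
def swapComp (l : ℕ) (α : Fin l → ℤ) (j : ℕ) (hj : j + 1 < l) : Fin l → ℤ := fun k =>
  if (k : ℕ) = j then α ⟨j + 1, hj⟩ - 1
  else if (k : ℕ) = j + 1 then α ⟨j, by omega⟩ + 1
  else α k

/-!
Modulo `I_RKst` a word with a repeated letter vanishes, so `u_t z u_t = 0` for every `z`, and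
`u_b` commutes with `⁅u_a, u_c⁆` whenever `a ≤ b ≤ c` (the Knuth relation for `a < b < c`,
nilpotency otherwise). Adjoining the letter `m` gives
`e_{k+1}([m+1]) = e_{k+1}([m]) + u_m e_k([m])`, and induction on `m` yields
`⁅e_{k+1}([m]), u_t⁆ = (∑_{a<m} ⁅u_a, u_t⁆) e_k([m])` for `m ≤ t`. These two facts make the
recursion preserve commutation, so `e_p([m])` and `e_q([m])` commute.

If `n_j = n_{j+1}`, the term of `J_α^n` indexed by `π` is therefore the term of `J_{α'}^n`
indexed by `π ∘ (j j+1)`, where `α'` is the swapped composition, and the signs are opposite.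
When `α' = α` the terms cancel in pairs; this avoids dividing by `2`, as the quotient may have
`2`-torsion.
-/

open scoped Relator in
lemma Fin.strictAnti_cons {α : Type*} [Preorder α] {n : ℕ} {f : Fin n → α} {a : α} :
    StrictAnti (Fin.cons a f : Fin (n + 1) → α) ↔ (∀ j, f j < a) ∧ StrictAnti f :=
  Fin.liftFun_cons (· > ·)

lemma List.prod_ofFn_comp_swap_succ {M : Type*} [Monoid M] :
    ∀ {l : ℕ} (F : Fin l → M) (j : ℕ) (hj : j + 1 < l),
      Commute (F ⟨j, Nat.lt_of_succ_lt hj⟩) (F ⟨j + 1, hj⟩) →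
        (List.ofFn (F ∘ Equiv.swap ⟨j, Nat.lt_of_succ_lt hj⟩ ⟨j + 1, hj⟩)).prod =
          (List.ofFn F).prod
  | l + 2, F, 0, _, h => by
    have hfix (i : Fin l) : Equiv.swap (0 : Fin (l + 2)) 1 i.succ.succ = i.succ.succ :=
      Equiv.swap_apply_of_ne_of_ne (Fin.succ_ne_zero _)
        ((Fin.succ_injective _).ne (Fin.succ_ne_zero i))
    change Commute (F 0) (F 1) at h
    change (List.ofFn (F ∘ Equiv.swap 0 1)).prod = _
    simp only [List.ofFn_succ, List.prod_cons, Function.comp_apply, Fin.succ_zero_eq_one,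
      Equiv.swap_apply_left, Equiv.swap_apply_right, hfix, ← mul_assoc, h.eq]
  | l + 1, F, j + 1, hj, h => by
    have hzero : Equiv.swap (⟨j + 1, by omega⟩ : Fin (l + 1)) ⟨j + 2, hj⟩ 0 = 0 :=
      Equiv.swap_apply_of_ne_of_ne (by simp [Fin.ext_iff]) (by simp [Fin.ext_iff])
    have hsucc (i : Fin l) : Equiv.swap (⟨j + 1, by omega⟩ : Fin (l + 1)) ⟨j + 2, hj⟩ i.succ =
        (Equiv.swap ⟨j, by omega⟩ ⟨j + 1, by omega⟩ i).succ :=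
      (Fin.succ_injective l).swap_apply ⟨j, by omega⟩ ⟨j + 1, by omega⟩ i
    rw [List.ofFn_succ, List.ofFn_succ, List.prod_cons, List.prod_cons]
    simp only [Function.comp_apply, hzero, hsucc]
    exact congrArg (F 0 * ·) (List.prod_ofFn_comp_swap_succ (F ∘ Fin.succ) j (by omega) h)

lemma Equiv.Perm.sum_eq_zero_of_mul_swap {ι M : Type*} [DecidableEq ι] [Fintype ι]
    [AddCommGroup M] {a b : ι} (hab : a ≠ b) {f : Equiv.Perm ι → M}
    (hf : ∀ σ, f (σ * Equiv.swap a b) = -f σ) : ∑ σ, f σ = 0 :=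
  Finset.sum_ninvolution (· * Equiv.swap a b) (fun σ => by simp [hf])
    (fun σ _ => by simpa [Equiv.swap_eq_one_iff] using hab) (fun _ => Finset.mem_univ _)
    (fun σ => by simp [mul_assoc])

/-- The step `F_{k+1} ↦ F_{k+1} + x F_k` of adjoining a new letter `x` preserves pairwise
commutation. -/
lemma commute_add_mul_of_lie {R : Type*} [Ring R] {F : ℕ → R} {x C : R}
    (hF : ∀ p q, Commute (F p) (F q)) (hx : ∀ k, x * F k * x = 0)
    (hC : ∀ k, ⁅F (k + 1), x⁆ = C * F k) (p q : ℕ) :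
    Commute (F (p + 1) + x * F p) (F (q + 1) + x * F q) := by
  have expand : ∀ p q, (F (p + 1) + x * F p) * (F (q + 1) + x * F q) =
      F (p + 1) * F (q + 1) + x * (F (p + 1) * F q + F p * F (q + 1)) + C * (F p * F q) := by
    intro p q
    have hFx : F (p + 1) * x = x * F (p + 1) + C * F p := by
      rw [← hC, Ring.lie_def]; abel
    rw [add_mul, mul_add, mul_add, ← mul_assoc (F (p + 1)), hFx, ← mul_assoc (x * F p) x, hx,
      zero_mul, add_zero]
    noncomm_ring
  rw [Commute, SemiconjBy, expand, expand, (hF _ _).eq, (hF p q).eq, (hF (p + 1) q).eq,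
    (hF p (q + 1)).eq, add_comm (F q * F (p + 1))]

def gen (N : ℕ) (i : Fin N) : RingQuot (RKRel N) := pr N (FreeAlgebra.ι ℤ i)

section Generators

variable {N : ℕ}

lemma pr_eq_zero_of_rel {x : FreeAlgebra ℤ (Fin N)} (h : RKRel N x 0) : pr N x = 0 :=
  (RingQuot.mkAlgHom_rel ℤ h).trans (map_zero _)

lemma pr_word (l : List (Fin N)) : pr N (word N l) = (l.map (gen N)).prod := by
  rw [word, map_list_prod, List.map_map]
  rfl

lemma prod_map_gen_eq_zero {l : List (Fin N)} (h : ¬ l.Nodup) : (l.map (gen N)).prod = 0 := by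
  rw [← pr_word]
  exact pr_eq_zero_of_rel (RKRel.repeated l h)

lemma exists_prod_map_gen_of_mem_closure {x : RingQuot (RKRel N)}
    (hx : x ∈ Submonoid.closure (Set.range (gen N))) :
    ∃ l : List (Fin N), (l.map (gen N)).prod = x := by
  induction hx using Submonoid.closure_induction with
  | mem x hx => obtain ⟨i, rfl⟩ := hx; exact ⟨[i], by simp⟩
  | one => exact ⟨[], rfl⟩
  | mul x y _ _ hx hy =>
    obtain ⟨l, rfl⟩ := hx
    obtain ⟨l', rfl⟩ := hy
    exact ⟨l ++ l', by simp⟩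

lemma gen_mul_mul_gen_self (t : Fin N) (z : RingQuot (RKRel N)) : gen N t * z * gen N t = 0 := by
  have hz : z ∈ Subalgebra.toSubmodule (Algebra.adjoin ℤ (Set.range (gen N))) := by
    rw [show Set.range (gen N) = pr N '' Set.range (FreeAlgebra.ι ℤ) from Set.range_comp _ _,
      Algebra.adjoin_image, FreeAlgebra.adjoin_range_ι, Algebra.map_top,
      (AlgHom.range_eq_top (pr N)).2 (RingQuot.mkAlgHom_surjective ℤ (RKRel N))]
    trivial
  rw [Algebra.adjoin_eq_span] at hz
  induction hz using Submodule.span_induction with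
  | mem x hx =>
    obtain ⟨l, rfl⟩ := exists_prod_map_gen_of_mem_closure hx
    simpa [List.prod_append, mul_assoc] using
      prod_map_gen_eq_zero (l := t :: (l ++ [t])) (by simp)
  | zero => simp
  | add x y _ _ hx hy => rw [mul_add, add_mul, hx, hy, add_zero]
  | smul r x _ hx => rw [mul_smul_comm, smul_mul_assoc, hx, smul_zero]

lemma gen_mul_self (t : Fin N) : gen N t * gen N t = 0 := by
  simpa using gen_mul_mul_gen_self t 1

lemma lie_gen_mul_gen (a t : Fin N) : ⁅gen N a, gen N t⁆ * gen N a = 0 := by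
  rw [Ring.lie_def, sub_mul, gen_mul_mul_gen_self, mul_assoc, gen_mul_self, mul_zero, sub_zero]

lemma commute_gen_lie {a b c : Fin N} (hab : a ≤ b) (hbc : b ≤ c) :
    Commute (gen N b) ⁅gen N a, gen N c⁆ := by
  by_cases hdeg : a = b ∨ b = c
  · rcases hdeg with rfl | rfl <;>
    · simp only [Commute, SemiconjBy, Ring.lie_def, mul_sub, sub_mul, ← mul_assoc, gen_mul_self,
        gen_mul_mul_gen_self, zero_mul]
      rw [mul_assoc, gen_mul_self, mul_zero]
  obtain ⟨hab', hbc'⟩ := not_or.1 hdeg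
  have := pr_eq_zero_of_rel (RKRel.knuth_rotation a b c (hab.lt_of_ne hab') (hbc.lt_of_ne hbc'))
  simp only [map_sub, map_mul, sub_eq_zero] at this
  exact this

end Generators

section ElementarySymmetric

variable {N : ℕ}

def lettersBelow (N m : ℕ) : Finset (Fin N) := Finset.univ.filter fun a => (a : ℕ) < m

@[simp] lemma mem_lettersBelow {m : ℕ} {a : Fin N} : a ∈ lettersBelow N m ↔ (a : ℕ) < m := by
  simp [lettersBelow]

lemma lettersBelow_zero : lettersBelow N 0 = ∅ := by
  ext; simp

lemma lettersBelow_succ {m : ℕ} (hm : m < N) :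
    lettersBelow N (m + 1) = insert ⟨m, hm⟩ (lettersBelow N m) := by
  ext a
  simp only [mem_lettersBelow, Order.lt_add_one_iff, Finset.mem_insert, Fin.ext_iff]
  omega

lemma lettersBelow_succ_of_le {m : ℕ} (hm : N ≤ m) :
    lettersBelow N (m + 1) = lettersBelow N m := by
  ext a
  simp only [mem_lettersBelow, Order.lt_add_one_iff]
  omega

lemma word_cons {k : ℕ} (a : Fin N) (g : Fin k → Fin N) :
    word N (List.ofFn (Fin.cons a g)) = FreeAlgebra.ι ℤ a * word N (List.ofFn g) := by
  simp [word, List.ofFn_succ]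

lemma esymFlag_succ (M k : ℕ) :
    esymFlag N M (k + 1) = ∑ a ∈ lettersBelow N M, FreeAlgebra.ι ℤ a * esymFlag N a k := by
  rw [esymFlag, ← (Fin.consEquiv fun _ => Fin N).sum_comp, Fintype.sum_prod_type, lettersBelow,
    Finset.sum_filter]
  refine Finset.sum_congr rfl fun a _ => ?_
  simp only [Fin.consEquiv, Equiv.coe_fn_mk, Fin.strictAnti_cons, Fin.forall_fin_succ,
    Fin.cons_zero, Fin.cons_succ, word_cons]
  split_ifs with ha
  · rw [esymFlag, Finset.mul_sum]
    refine Finset.sum_congr rfl fun g _ => ?_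
    rw [mul_ite, mul_zero]
    refine if_congr ⟨fun h => ⟨h.1.2, h.1.1⟩, fun h => ⟨⟨h.2, h.1⟩, ha, fun i => ?_⟩⟩ rfl rfl
    exact (h.2 i).trans ha
  · exact Finset.sum_eq_zero fun g _ => if_neg fun h => ha h.2.1

lemma esymFlag_zero (m : ℕ) : esymFlag N m 0 = 1 := by
  simp [esymFlag, word, Subsingleton.strictAnti]

lemma esymFlag_zero_left (k : ℕ) : esymFlag N 0 (k + 1) = 0 := by
  rw [esymFlag_succ, lettersBelow_zero, Finset.sum_empty]

lemma esymFlag_succ_left_of_le {m : ℕ} (hm : N ≤ m) (k : ℕ) :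
    esymFlag N (m + 1) k = esymFlag N m k := by
  cases k with
  | zero => rw [esymFlag_zero, esymFlag_zero]
  | succ k => rw [esymFlag_succ, esymFlag_succ, lettersBelow_succ_of_le hm]

lemma pr_esymFlag_succ_succ {m : ℕ} (hm : m < N) (k : ℕ) :
    pr N (esymFlag N (m + 1) (k + 1)) =
      pr N (esymFlag N m (k + 1)) + gen N ⟨m, hm⟩ * pr N (esymFlag N m k) := by
  rw [esymFlag_succ, lettersBelow_succ hm, Finset.sum_insert (by simp), ← esymFlag_succ,
    map_add, map_mul, add_comm]
  rfl

def lieSum (N m : ℕ) (t : Fin N) : RingQuot (RKRel N) :=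
  ∑ a ∈ lettersBelow N m, ⁅gen N a, gen N t⁆

lemma commute_gen_lieSum {m : ℕ} {b t : Fin N} (hmb : m ≤ b) (hbt : b ≤ t) :
    Commute (gen N b) (lieSum N m t) :=
  Commute.sum_right _ _ _ fun _ ha =>
    commute_gen_lie (Fin.le_def.2 ((mem_lettersBelow.1 ha).le.trans hmb)) hbt

lemma lie_pr_esymFlag_gen {m : ℕ} {t : Fin N} (hmt : m ≤ t) (k : ℕ) :
    ⁅pr N (esymFlag N m (k + 1)), gen N t⁆ = lieSum N m t * pr N (esymFlag N m k) := by
  induction m generalizing k with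
  | zero => simp [esymFlag_zero_left, lieSum, lettersBelow_zero, Ring.lie_def]
  | succ m ih =>
    have hm : m < N := by omega
    set x := gen N t
    set y := gen N ⟨m, hm⟩
    have hsum : lieSum N (m + 1) t = lieSum N m t + ⁅y, x⁆ := by
      rw [lieSum, lettersBelow_succ hm, Finset.sum_insert (by simp), add_comm]; rfl
    have leibniz (e e' : RingQuot (RKRel N)) :
        ⁅e + y * e', x⁆ = ⁅e, x⁆ + y * ⁅e', x⁆ + ⁅y, x⁆ * e' := by
      simp only [Ring.lie_def, mul_sub, sub_mul, add_mul, mul_add, mul_assoc]; abel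
    rw [pr_esymFlag_succ_succ hm, leibniz, ih (by omega), hsum]
    cases k with
    | zero => simp [esymFlag_zero, Ring.lie_def]
    | succ k =>
      rw [ih (by omega), pr_esymFlag_succ_succ hm, ← mul_assoc y,
        (commute_gen_lieSum (m := m) le_rfl (Fin.le_def.2 (by dsimp; omega))).eq, add_mul,
        mul_add, mul_add, ← mul_assoc ⁅y, x⁆ y, lie_gen_mul_gen, zero_mul, add_zero, mul_assoc]

theorem commute_pr_esymFlag : ∀ m p q : ℕ, Commute (pr N (esymFlag N m p)) (pr N (esymFlag N m q))
  | _, 0, _ => by rw [esymFlag_zero, map_one]; exact Commute.one_left _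
  | _, _ + 1, 0 => by rw [esymFlag_zero, map_one]; exact Commute.one_right _
  | 0, _ + 1, _ + 1 => by rw [esymFlag_zero_left, map_zero]; exact Commute.zero_left _
  | m + 1, p + 1, q + 1 => by
    by_cases hm : m < N
    · rw [pr_esymFlag_succ_succ hm, pr_esymFlag_succ_succ hm]
      exact commute_add_mul_of_lie (commute_pr_esymFlag m) (fun _ => gen_mul_mul_gen_self _ _)
        (lie_pr_esymFlag_gen le_rfl) p q
    · rw [esymFlag_succ_left_of_le (by omega), esymFlag_succ_left_of_le (by omega)]
      exact commute_pr_esymFlag m (p + 1) (q + 1)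

theorem commute_pr_esymFlagZ (m : ℕ) (d e : ℤ) :
    Commute (pr N (esymFlagZ N m d)) (pr N (esymFlagZ N m e)) := by
  unfold esymFlagZ
  split_ifs
  · exact commute_pr_esymFlag _ _ _
  all_goals simp

end ElementarySymmetric

section SwapComp

variable {l : ℕ} (β : Fin l → ℤ) (j : ℕ) (hj : j + 1 < l)

lemma swapComp_sub_val (k : Fin l) :
    swapComp l β j hj k - ((k : ℕ) : ℤ) =
      β (Equiv.swap (⟨j, Nat.lt_of_succ_lt hj⟩ : Fin l) ⟨j + 1, hj⟩ k) -
        ((Equiv.swap (⟨j, Nat.lt_of_succ_lt hj⟩ : Fin l) ⟨j + 1, hj⟩ k : ℕ) : ℤ) := by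
  simp only [swapComp]
  split_ifs with h0 h1
  · rw [show k = ⟨j, Nat.lt_of_succ_lt hj⟩ from Fin.ext h0, Equiv.swap_apply_left]; push_cast; ring
  · rw [show k = ⟨j + 1, hj⟩ from Fin.ext h1, Equiv.swap_apply_right]; push_cast; ring
  · rw [Equiv.swap_apply_of_ne_of_ne (fun h => h0 (congrArg Fin.val h))
      (fun h => h1 (congrArg Fin.val h))]

lemma swapComp_eq_self (h : β ⟨j, Nat.lt_of_succ_lt hj⟩ = β ⟨j + 1, hj⟩ - 1) :
    swapComp l β j hj = β := by
  funext k
  simp only [swapComp]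
  split_ifs with h0 h1
  · rw [← h, show k = ⟨j, Nat.lt_of_succ_lt hj⟩ from Fin.ext h0]
  · rw [show k = ⟨j + 1, hj⟩ from Fin.ext h1]; omega
  · rfl

end SwapComp

/-- The image in `U/I_RKst` of the product `e_{β_1+π(1)-1}([n_1]) ⋯ e_{β_l+π(l)-l}([n_l])`. -/
def jflagTerm (N l : ℕ) (n : Fin l → ℕ) (β : Fin l → ℤ) (σ : Equiv.Perm (Fin l)) :
    RingQuot (RKRel N) :=
  (List.ofFn fun k => pr N (esymFlagZ N (n k) (β k + ((σ k : ℕ) : ℤ) - ((k : ℕ) : ℤ)))).prod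

lemma pr_Jflag (N l : ℕ) (β : Fin l → ℤ) (n : Fin l → ℕ) :
    pr N (Jflag N l β n) = ∑ σ, ((Equiv.Perm.sign σ : ℤˣ) : ℤ) • jflagTerm N l n β σ := by
  rw [Jflag, map_sum]
  refine Finset.sum_congr rfl fun σ _ => ?_
  rw [map_zsmul, map_list_prod, List.map_ofFn]
  rfl

lemma sign_smul_jflagTerm_mul_swap (N : ℕ) {l : ℕ} (n : Fin l → ℕ) (β : Fin l → ℤ) (j : ℕ)
    (hj : j + 1 < l) (hn : n ⟨j, Nat.lt_of_succ_lt hj⟩ = n ⟨j + 1, hj⟩) (σ : Equiv.Perm (Fin l)) :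
    ((Equiv.Perm.sign (σ * Equiv.swap ⟨j, Nat.lt_of_succ_lt hj⟩ ⟨j + 1, hj⟩) : ℤˣ) : ℤ) •
        jflagTerm N l n (swapComp l β j hj) (σ * Equiv.swap ⟨j, Nat.lt_of_succ_lt hj⟩ ⟨j + 1, hj⟩) =
      -(((Equiv.Perm.sign σ : ℤˣ) : ℤ) • jflagTerm N l n β σ) := by
  set τ := Equiv.swap (⟨j, Nat.lt_of_succ_lt hj⟩ : Fin l) ⟨j + 1, hj⟩ with hτ
  have hnτ (k : Fin l) : n (τ k) = n k := by
    simp only [τ, Equiv.swap_apply_def]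
    split_ifs with h0 h1
    · rw [h0, hn]
    · rw [h1, hn]
    · rfl
  have hfactors : (fun k : Fin l => pr N (esymFlagZ N (n k)
        (swapComp l β j hj k + (((σ * τ) k : ℕ) : ℤ) - ((k : ℕ) : ℤ)))) =
      (fun k : Fin l => pr N (esymFlagZ N (n k) (β k + ((σ k : ℕ) : ℤ) - ((k : ℕ) : ℤ)))) ∘ τ := by
    funext k
    have := swapComp_sub_val β j hj k
    rw [← hτ] at this
    simp only [Function.comp_apply, Equiv.Perm.mul_apply, hnτ]
    congr 2
    linarith
  have hterm : jflagTerm N l n (swapComp l β j hj) (σ * τ) = jflagTerm N l n β σ := by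
    rw [jflagTerm, hfactors, List.prod_ofFn_comp_swap_succ _ j hj]
    · rfl
    · dsimp only
      rw [hn]
      exact commute_pr_esymFlagZ _ _ _
  rw [hterm, Equiv.Perm.sign_mul, Equiv.Perm.sign_swap (by simp [Fin.ext_iff])]
  simp

/-- If `n_j = n_{j+1}`, then modulo `I_RKst`,
`J_α^n ≡ −J_{α_1,…,α_{j-1},α_{j+1}−1,α_j+1,…,α_l}^n`; in particular, if moreover
`α_j = α_{j+1} − 1`, then `J_α^n ≡ 0`. -/
theorem Jflag_swap (N l : ℕ) (α : Fin l → ℕ) (n : Fin l → ℕ) (j : ℕ) (hj : j + 1 < l)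
    (hn : n ⟨j, by omega⟩ = n ⟨j + 1, hj⟩) :
    pr N (Jflag N l (fun k => (α k : ℤ)) n) =
      - pr N (Jflag N l (swapComp l (fun k => (α k : ℤ)) j hj) n) ∧
    (((α ⟨j, by omega⟩ : ℤ) = (α ⟨j + 1, hj⟩ : ℤ) - 1) →
      pr N (Jflag N l (fun k => (α k : ℤ)) n) = 0) := by
  have hsign := sign_smul_jflagTerm_mul_swap N n (fun k => (α k : ℤ)) j hj hn
  refine ⟨?_, fun hα => ?_⟩
  · rw [pr_Jflag, pr_Jflag]
    conv_rhs =>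
      rw [← Equiv.sum_comp (Equiv.mulRight (Equiv.swap ⟨j, Nat.lt_of_succ_lt hj⟩ ⟨j + 1, hj⟩))]
    simp only [Equiv.coe_mulRight, hsign, Finset.sum_neg_distrib, neg_neg]
  · rw [pr_Jflag]
    refine Equiv.Perm.sum_eq_zero_of_mul_swap (a := ⟨j, Nat.lt_of_succ_lt hj⟩) (b := ⟨j + 1, hj⟩)
      (by simp [Fin.ext_iff]) fun σ => ?_
    simpa only [swapComp_eq_self (fun k => (α k : ℤ)) j hj hα] using hsign σ
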